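/- arXiv:1112.3228 — 5 statements merged into one kernel-verified Lean document; each statement's English description precedes it below -/
import Mathlib

section
/- For every integer n ≥ 2, every real p with n + p > 2, and every y ∈ ℝⁿ with Q(y) > 0, the Gaussian improper-mixture intensity has the closed form Λ_{n,p}(y) = Γ((n+p−2)/2) · 2^{(p−3)/2} · π^{−(n−1)/2} · n^{−1/2} / Q(y)^{(n+p−2)/2}; in particular Λ_{n,p}(y) is finite. -/
/-! Completing the square, `∑ᵢ (yᵢ - θ)² = Q(y) + n (θ - ȳ)²`, makes the `θ`-integral Gaussian: it
contributes `√(2πσ²/n) · exp(-Q(y)/(2σ²))`. The remaining `σ`-integrand is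
`σ^(1-n-p) exp(-Q(y)/(2σ²))`, and the substitution `σ ↦ 1/σ` turns its integral over `(0, ∞)` into
a Gamma integral, which converges because `n + p > 2`. -/

open MeasureTheory
open scoped ENNReal

/-- `Q(y) = ∑ᵢ (yᵢ - ȳ)²` where `ȳ` is the mean of the coordinates. -/
noncomputable def Qstat (n : ℕ) (y : Fin n → ℝ) : ℝ :=
  ∑ i, (y i - (∑ j, y j) / n) ^ 2

/-- The Gaussian improper-mixture intensity
`Λ_{n,p}(y) = ∫₀^∞ ∫_{-∞}^∞ (2πσ²)^{-n/2} exp(-∑ᵢ(yᵢ-θ)²/(2σ²)) σ^{-p} dθ dσ`,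
with values in `[0, ∞]`. -/
noncomputable def gaussIntensity (n : ℕ) (p : ℝ) (y : Fin n → ℝ) : ℝ≥0∞ :=
  ∫⁻ σ in Set.Ioi (0 : ℝ), ∫⁻ θ : ℝ,
    ENNReal.ofReal ((2 * Real.pi * σ ^ 2) ^ (-(n : ℝ) / 2) *
      Real.exp (-(∑ i, (y i - θ) ^ 2) / (2 * σ ^ 2)) * σ ^ (-p))

open Real Set

lemma sum_sq_sub_eq_Qstat_add_mul_sq {n : ℕ} (hn : n ≠ 0) (y : Fin n → ℝ) (θ : ℝ) :
    ∑ i, (y i - θ) ^ 2 = Qstat n y + n * (θ - (∑ j, y j) / n) ^ 2 := by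
  set m := (∑ j, y j) / n
  have hsum : ∑ i, (y i - m) = 0 := by
    simp only [Finset.sum_sub_distrib, Finset.sum_const, Finset.card_univ, Fintype.card_fin,
      nsmul_eq_mul, m]
    field_simp
    ring
  calc ∑ i, (y i - θ) ^ 2 = ∑ i, ((y i - m) ^ 2 + (y i - m) * (2 * (m - θ)) + (m - θ) ^ 2) :=
        Finset.sum_congr rfl fun i _ ↦ by ring
    _ = Qstat n y + (∑ i, (y i - m)) * (2 * (m - θ)) + n * (m - θ) ^ 2 := by
        simp only [Finset.sum_add_distrib, ← Finset.sum_mul, Finset.sum_const, Finset.card_univ,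
          Fintype.card_fin, nsmul_eq_mul, Qstat, m]
    _ = Qstat n y + n * (θ - m) ^ 2 := by rw [hsum]; ring

lemma integral_exp_neg_sum_sq_sub_div {n : ℕ} (hn : n ≠ 0) (y : Fin n → ℝ) (c : ℝ) :
    ∫ θ, exp (-(∑ i, (y i - θ) ^ 2) / c) = √(π * c / n) * exp (-Qstat n y / c) := by
  have hsplit : ∀ θ, exp (-(∑ i, (y i - θ) ^ 2) / c)
      = exp (-Qstat n y / c) * exp (-(n / c) * (θ - (∑ j, y j) / n) ^ 2) := fun θ ↦ by
    rw [sum_sq_sub_eq_Qstat_add_mul_sq hn, ← exp_add]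
    ring_nf
  simp_rw [hsplit]
  rw [integral_const_mul, integral_sub_right_eq_self (fun θ ↦ exp (-(n / c) * θ ^ 2)),
    integral_gaussian, div_div_eq_mul_div, mul_comm]

lemma lintegral_ofReal_eq_ofReal_of_integral_pos {α : Type*} [MeasurableSpace α]
    {μ : Measure α} {f : α → ℝ} (hf : 0 ≤ᵐ[μ] f) {v : ℝ}
    (hv : ∫ a, f a ∂μ = v) (hv_pos : 0 < v) :
    ∫⁻ a, ENNReal.ofReal (f a) ∂μ = ENNReal.ofReal v := by
  rw [← hv, ofReal_integral_eq_lintegral_ofReal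
    (.of_integral_ne_zero (hv ▸ hv_pos.ne')) hf]

lemma integral_Ioi_rpow_mul_exp_neg_div_sq {a k : ℝ} (ha : 0 < a) (hk : 0 < k) :
    ∫ σ in Ioi 0, σ ^ (-k - 1) * exp (-a / σ ^ 2) = Gamma (k / 2) / (2 * a ^ (k / 2)) := by
  have hinv : ∀ σ ∈ Ioi (0 : ℝ), (|(-1 : ℝ)| * σ ^ ((-1 : ℝ) - 1)) •
      ((σ ^ (-1 : ℝ)) ^ (k - 1) * exp (-a * (σ ^ (-1 : ℝ)) ^ (2 : ℝ)))
      = σ ^ (-k - 1) * exp (-a / σ ^ 2) := fun σ (hσ : 0 < σ) ↦ by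
    rw [rpow_neg_one, rpow_two, smul_eq_mul, abs_neg, abs_one, one_mul, inv_rpow hσ.le,
      ← rpow_neg hσ.le, ← mul_assoc, ← rpow_add hσ]
    congr 2 <;> ring
  rw [← setIntegral_congr_fun measurableSet_Ioi hinv,
    integral_comp_rpow_Ioi (fun u ↦ u ^ (k - 1) * exp (-a * u ^ (2 : ℝ))) (by norm_num),
    integral_rpow_mul_exp_neg_mul_rpow two_pos (by linarith) ha, sub_add_cancel, neg_div,
    rpow_neg ha.le]
  field_simp

lemma lintegral_gaussIntensity_integrand {n : ℕ} (hn : n ≠ 0) (p : ℝ) (y : Fin n → ℝ) {σ : ℝ}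
    (hσ : 0 < σ) :
    ∫⁻ θ, ENNReal.ofReal ((2 * π * σ ^ 2) ^ (-(n : ℝ) / 2) *
        exp (-(∑ i, (y i - θ) ^ 2) / (2 * σ ^ 2)) * σ ^ (-p)) =
      ENNReal.ofReal ((2 * π) ^ (-((n : ℝ) - 1) / 2) * (n : ℝ) ^ (-(1 : ℝ) / 2)) *
        ENNReal.ofReal (σ ^ (-((n : ℝ) + p - 2) - 1) * exp (-(Qstat n y / 2) / σ ^ 2)) := by
  have hn' : (0 : ℝ) < n := by positivity
  have hpow : (2 * π * σ ^ 2) ^ (-(n : ℝ) / 2) * σ ^ (-p) * √(π * (2 * σ ^ 2) / n) =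
      (2 * π) ^ (-((n : ℝ) - 1) / 2) * (n : ℝ) ^ (-(1 : ℝ) / 2) *
        σ ^ (-((n : ℝ) + p - 2) - 1) := by
    have hsq : (2 * π * σ ^ 2) ^ (-(n : ℝ) / 2) = (2 * π) ^ (-(n : ℝ) / 2) * σ ^ (-(n : ℝ)) := by
      rw [mul_rpow (by positivity) (by positivity), ← rpow_natCast_mul hσ.le]
      congr 2
      push_cast
      ring
    have hsqrt : √(π * (2 * σ ^ 2) / n) = (2 * π) ^ (1 / 2 : ℝ) * (n : ℝ) ^ (-(1 : ℝ) / 2) * σ := by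
      rw [show π * (2 * σ ^ 2) / n = 2 * π / n * σ ^ 2 by ring, sqrt_mul' _ (sq_nonneg σ),
        sqrt_sq hσ.le, sqrt_eq_rpow, div_rpow (by positivity) hn'.le, neg_div, rpow_neg hn'.le,
        div_eq_mul_inv]
    calc _ = ((2 * π) ^ (-(n : ℝ) / 2) * (2 * π) ^ (1 / 2 : ℝ)) * (n : ℝ) ^ (-(1 : ℝ) / 2) *
          (σ ^ (-(n : ℝ)) * σ ^ (-p) * σ) := by rw [hsq, hsqrt]; ring
      _ = _ := by
        rw [← rpow_add (by positivity), ← rpow_add hσ, ← rpow_add_one hσ.ne']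
        ring_nf
  have hval : ∫ θ, (2 * π * σ ^ 2) ^ (-(n : ℝ) / 2) * σ ^ (-p) *
      exp (-(∑ i, (y i - θ) ^ 2) / (2 * σ ^ 2)) =
      (2 * π) ^ (-((n : ℝ) - 1) / 2) * (n : ℝ) ^ (-(1 : ℝ) / 2) *
        (σ ^ (-((n : ℝ) + p - 2) - 1) * exp (-(Qstat n y / 2) / σ ^ 2)) := by
    rw [integral_const_mul, integral_exp_neg_sum_sq_sub_div hn, ← mul_assoc, hpow, mul_assoc,
      show -Qstat n y / (2 * σ ^ 2) = -(Qstat n y / 2) / σ ^ 2 by ring]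
  rw [← ENNReal.ofReal_mul (by positivity)]
  refine lintegral_ofReal_eq_ofReal_of_integral_pos (.of_forall fun θ ↦ by positivity) ?_
    (by positivity)
  simpa only [mul_right_comm _ _ (σ ^ (-p))] using hval

lemma lintegral_Ioi_rpow_mul_exp_neg_div_sq {a k : ℝ} (ha : 0 < a) (hk : 0 < k) :
    ∫⁻ σ in Ioi 0, ENNReal.ofReal (σ ^ (-k - 1) * exp (-a / σ ^ 2)) =
      ENNReal.ofReal (Gamma (k / 2) / (2 * a ^ (k / 2))) :=
  lintegral_ofReal_eq_ofReal_of_integral_pos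
    (ae_restrict_of_forall_mem measurableSet_Ioi fun σ (hσ : 0 < σ) ↦ by positivity)
    (integral_Ioi_rpow_mul_exp_neg_div_sq ha hk) (by positivity)

lemma two_pi_rpow_mul_Gamma_div_eq {n : ℕ} {p Q : ℝ} (hQ : 0 < Q) :
    (2 * π) ^ (-((n : ℝ) - 1) / 2) * (n : ℝ) ^ (-(1 : ℝ) / 2) *
        (Gamma (((n : ℝ) + p - 2) / 2) / (2 * (Q / 2) ^ (((n : ℝ) + p - 2) / 2))) =
      Gamma (((n : ℝ) + p - 2) / 2) * (2 : ℝ) ^ ((p - 3) / 2) *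
        π ^ (-((n : ℝ) - 1) / 2) * (n : ℝ) ^ (-(1 : ℝ) / 2) / Q ^ (((n : ℝ) + p - 2) / 2) := by
  have h2 : (2 : ℝ) ^ (-((n : ℝ) - 1) / 2) =
      2 ^ ((p - 3) / 2) * 2 / 2 ^ (((n : ℝ) + p - 2) / 2) := by
    rw [eq_div_iff (by positivity), ← rpow_add two_pos, ← rpow_add_one two_ne_zero]
    ring_nf
  rw [mul_rpow zero_le_two pi_pos.le, div_rpow hQ.le zero_le_two, h2]
  field_simp

/-- Closed form for the Gaussian improper-mixture intensity: for `n ≥ 2`,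
`n + p > 2` and `Q(y) > 0`,
`Λ_{n,p}(y) = Γ((n+p-2)/2) 2^{(p-3)/2} π^{-(n-1)/2} n^{-1/2} / Q(y)^{(n+p-2)/2}`;
in particular `Λ_{n,p}(y)` is finite. -/
theorem gaussIntensity_closed_form (n : ℕ) (hn : 2 ≤ n) (p : ℝ)
    (hp : 2 < (n : ℝ) + p) (y : Fin n → ℝ) (hQ : 0 < Qstat n y) :
    gaussIntensity n p y =
      ENNReal.ofReal (Real.Gamma (((n : ℝ) + p - 2) / 2) * (2 : ℝ) ^ ((p - 3) / 2) *
        Real.pi ^ (-((n : ℝ) - 1) / 2) * (n : ℝ) ^ (-(1 : ℝ) / 2) /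
          Qstat n y ^ (((n : ℝ) + p - 2) / 2)) ∧
    gaussIntensity n p y < ⊤ := by
  rw [gaussIntensity, setLIntegral_congr_fun measurableSet_Ioi fun σ hσ ↦
      lintegral_gaussIntensity_integrand (by omega) p y hσ,
    lintegral_const_mul' _ _ ENNReal.ofReal_ne_top,
    lintegral_Ioi_rpow_mul_exp_neg_div_sq (half_pos hQ) (by linarith),
    ← ENNReal.ofReal_mul (by positivity), two_pi_rpow_mul_Gamma_div_eq hQ]
  exact ⟨rfl, ENNReal.ofReal_lt_top⟩
end

section
/- For all real y₁ ≠ y₂, the Cauchy improper-mixture intensity with p = 1 satisfies λ_{2,1}(y₁, y₂) = ∫_0^∞ ∫_{−∞}^∞ f(y₁; θ₁, θ₂) f(y₂; θ₁, θ₂) θ₂^{−1} dθ₁ dθ₂ = 1/(2|y₁ − y₂|). -/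
/-!
For a fixed scale `c > 0` the inner integral is the convolution of two Cauchy densities of
scale `c`, i.e. the Cauchy density of scale `2c` evaluated at `d = y₁ - y₂`, which is
`2c / (π (d² + 4c²))`; it is computed from an explicit antiderivative. Dividing by `c` and
integrating over `c > 0` gives `(2/π) · π / (4|d|) = 1 / (2|d|)`.
-/

open MeasureTheory
open scoped ENNReal

/-- The Cauchy improper-mixture intensity
`λ_{n,p}(y) = ∫₀^∞ ∫_{-∞}^∞ ∏ᵢ f(yᵢ; θ₁, θ₂) θ₂^{-p} dθ₁ dθ₂`,
where `f(u; θ₁, θ₂) = θ₂ / (π((u - θ₁)² + θ₂²))` is the Cauchy density. -/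
noncomputable def cauchyIntensity (n : ℕ) (p : ℝ) (y : Fin n → ℝ) : ℝ≥0∞ :=
  ∫⁻ θ₂ in Set.Ioi (0 : ℝ), ∫⁻ θ₁ : ℝ,
    ENNReal.ofReal ((∏ i, θ₂ / (Real.pi * ((y i - θ₁) ^ 2 + θ₂ ^ 2))) * θ₂ ^ (-p))

open ProbabilityTheory Filter Real Set
open scoped Topology NNReal

lemma tendsto_inv_cocompact_nhds_zero : Tendsto (fun t : ℝ => t⁻¹) (cocompact ℝ) (𝓝 0) := by
  rw [tendsto_zero_iff_norm_tendsto_zero]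
  simpa only [norm_inv, Function.comp_def] using
    tendsto_inv_atTop_zero.comp tendsto_norm_cocompact_atTop

lemma tendsto_log_sq_add_sq_sub_log_sq_add_sq (a b : ℝ) {c : ℝ} (hc : c ≠ 0) :
    Tendsto (fun t : ℝ => log ((t - a) ^ 2 + c ^ 2) - log ((t - b) ^ 2 + c ^ 2))
      (cocompact ℝ) (𝓝 0) := by
  -- `log ((t - e) ^ 2 + c ^ 2) = log (t ^ 2) + g e t⁻¹` with `g e` continuous and `g e 0 = 0`
  set g : ℝ → ℝ → ℝ := fun e s => log ((1 - e * s) ^ 2 + (c * s) ^ 2)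
  have hg : ∀ e, Tendsto (fun t : ℝ => g e t⁻¹) (cocompact ℝ) (𝓝 0) := fun e => by
    have hcont : Continuous fun s => (1 - e * s) ^ 2 + (c * s) ^ 2 := by fun_prop
    simpa [g, Function.comp_def] using
      ((continuousAt_log (by simp)).comp hcont.continuousAt).tendsto.comp
        tendsto_inv_cocompact_nhds_zero
  have hne : ∀ᶠ t : ℝ in cocompact ℝ, t ≠ 0 :=
    (tendsto_norm_cocompact_atTop.eventually_gt_atTop 0).mono fun t ht => norm_pos_iff.mp ht
  refine (sub_zero (0 : ℝ) ▸ (hg a).sub (hg b)).congr' ?_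
  filter_upwards [hne] with t ht
  have hsplit : ∀ e, log ((t - e) ^ 2 + c ^ 2) = log (t ^ 2) + g e t⁻¹ := fun e => by
    have hpos : 0 < (1 - e * t⁻¹) ^ 2 + (c * t⁻¹) ^ 2 := by positivity
    rw [← log_mul (by positivity) hpos.ne']
    congr 1
    field_simp
  rw [hsplit, hsplit]
  ring

lemma tendsto_arctan_sub_div_atTop (a : ℝ) {c : ℝ} (hc : 0 < c) :
    Tendsto (fun t : ℝ => arctan ((t - a) / c)) atTop (𝓝 (π / 2)) :=
  (tendsto_nhds_of_tendsto_nhdsWithin tendsto_arctan_atTop).comp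
    ((tendsto_atTop_add_const_right _ (-a) tendsto_id).atTop_div_const hc)

lemma tendsto_arctan_sub_div_atBot (a : ℝ) {c : ℝ} (hc : 0 < c) :
    Tendsto (fun t : ℝ => arctan ((t - a) / c)) atBot (𝓝 (-(π / 2))) :=
  (tendsto_nhds_of_tendsto_nhdsWithin tendsto_arctan_atBot).comp
    ((tendsto_atBot_add_const_right _ (-a) tendsto_id).atBot_div_const hc)

lemma hasDerivAt_log_sub_sq_add_sq (a : ℝ) {c : ℝ} (hc : c ≠ 0) (t : ℝ) :
    HasDerivAt (fun t => log ((t - a) ^ 2 + c ^ 2)) (2 * (t - a) / ((t - a) ^ 2 + c ^ 2)) t := by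
  have h : HasDerivAt (fun t => (t - a) ^ 2 + c ^ 2) (2 * (t - a)) t := by
    simpa using (((hasDerivAt_id' t).sub_const a).pow 2).add_const (c ^ 2)
  exact h.log (by positivity)

lemma hasDerivAt_arctan_sub_div (a : ℝ) {c : ℝ} (hc : c ≠ 0) (t : ℝ) :
    HasDerivAt (fun t => arctan ((t - a) / c)) (c / ((t - a) ^ 2 + c ^ 2)) t := by
  refine (((hasDerivAt_id' t).sub_const a).div_const c).arctan.congr_deriv ?_
  field_simp
  ring

lemma cauchyPDFReal_comm (x₀ : ℝ) (γ : ℝ≥0) (x : ℝ) :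
    cauchyPDFReal x₀ γ x = cauchyPDFReal x γ x₀ := by
  rw [cauchyPDFReal_def, cauchyPDFReal_def, ← neg_sub, neg_sq]

lemma cauchyPDFReal_toNNReal (x₀ : ℝ) {γ : ℝ} (hγ : 0 ≤ γ) (x : ℝ) :
    cauchyPDFReal x₀ γ.toNNReal x = γ / (π * ((x - x₀) ^ 2 + γ ^ 2)) := by
  rw [cauchyPDFReal_def, Real.coe_toNNReal _ hγ, div_eq_mul_inv, mul_inv]
  ring

lemma cauchyPDFReal_nonneg (x₀ : ℝ) (γ : ℝ≥0) (x : ℝ) : 0 ≤ cauchyPDFReal x₀ γ x := by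
  rw [cauchyPDFReal_def]
  positivity

lemma cauchyPDFReal_le (x₀ : ℝ) (γ : ℝ≥0) (x : ℝ) :
    cauchyPDFReal x₀ γ x ≤ π⁻¹ * (γ : ℝ)⁻¹ := by
  rcases eq_or_ne γ 0 with rfl | hγ
  · simp
  rw [cauchyPDFReal_def, mul_assoc]
  gcongr
  rw [← div_eq_mul_inv, div_le_iff₀ (by positivity)]
  field_simp
  nlinarith [sq_nonneg (x - x₀)]

-- Partial fractions; the logarithmic part vanishes at `±∞`.
noncomputable def cauchyProductPrimitive (a b c t : ℝ) : ℝ :=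
  c / (π ^ 2 * ((a - b) ^ 2 + 4 * c ^ 2)) *
    (arctan ((t - a) / c) + arctan ((t - b) / c) -
      c / (a - b) * (log ((t - a) ^ 2 + c ^ 2) - log ((t - b) ^ 2 + c ^ 2)))

lemma hasDerivAt_cauchyProductPrimitive {a b : ℝ} (hab : a ≠ b) {γ : ℝ≥0} (hγ : γ ≠ 0)
    (t : ℝ) :
    HasDerivAt (cauchyProductPrimitive a b γ) (cauchyPDFReal a γ t * cauchyPDFReal b γ t) t := by
  have hc : (γ : ℝ) ≠ 0 := by positivity
  have h := (((hasDerivAt_arctan_sub_div a hc t).add (hasDerivAt_arctan_sub_div b hc t)).sub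
    (((hasDerivAt_log_sub_sq_add_sq a hc t).sub
      (hasDerivAt_log_sub_sq_add_sq b hc t)).const_mul (γ / (a - b)))).const_mul
    (γ / (π ^ 2 * ((a - b) ^ 2 + 4 * γ ^ 2)))
  refine h.congr_deriv ?_
  have hab' : a - b ≠ 0 := sub_ne_zero.mpr hab
  rw [cauchyPDFReal_comm a, cauchyPDFReal_comm b, cauchyPDFReal_def, cauchyPDFReal_def]
  field_simp
  ring

lemma tendsto_cauchyProductPrimitive_atTop (a b : ℝ) {c : ℝ} (hc : 0 < c) :
    Tendsto (cauchyProductPrimitive a b c) atTop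
      (𝓝 (c / (π ^ 2 * ((a - b) ^ 2 + 4 * c ^ 2)) * π)) := by
  have h := (((tendsto_arctan_sub_div_atTop a hc).add (tendsto_arctan_sub_div_atTop b hc)).sub
    (((tendsto_log_sq_add_sq_sub_log_sq_add_sq a b hc.ne').mono_left
      atTop_le_cocompact).const_mul (c / (a - b)))).const_mul
    (c / (π ^ 2 * ((a - b) ^ 2 + 4 * c ^ 2)))
  simp only [mul_zero, sub_zero, add_halves] at h
  exact h

lemma tendsto_cauchyProductPrimitive_atBot (a b : ℝ) {c : ℝ} (hc : 0 < c) :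
    Tendsto (cauchyProductPrimitive a b c) atBot
      (𝓝 (-(c / (π ^ 2 * ((a - b) ^ 2 + 4 * c ^ 2)) * π))) := by
  have h := (((tendsto_arctan_sub_div_atBot a hc).add (tendsto_arctan_sub_div_atBot b hc)).sub
    (((tendsto_log_sq_add_sq_sub_log_sq_add_sq a b hc.ne').mono_left
      atBot_le_cocompact).const_mul (c / (a - b)))).const_mul
    (c / (π ^ 2 * ((a - b) ^ 2 + 4 * c ^ 2)))
  simp only [mul_zero, sub_zero, ← neg_add, add_halves, mul_neg] at h
  exact h

lemma integrable_cauchyPDFReal_mul_cauchyPDFReal (a b : ℝ) (γ : ℝ≥0) :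
    Integrable fun x => cauchyPDFReal a γ x * cauchyPDFReal b γ x :=
  (integrable_cauchyPDFReal a).mul_bdd (measurable_cauchyPDFReal b γ).aestronglyMeasurable
    (ae_of_all _ fun x => by
      rw [norm_of_nonneg (cauchyPDFReal_nonneg b γ x)]
      exact cauchyPDFReal_le b γ x)

-- Cauchy densities form a convolution semigroup in which the scales add.
theorem integral_cauchyPDFReal_mul_cauchyPDFReal {a b : ℝ} (hab : a ≠ b) {γ : ℝ≥0}
    (hγ : γ ≠ 0) :
    ∫ x, cauchyPDFReal a γ x * cauchyPDFReal b γ x = cauchyPDFReal a (2 * γ) b := by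
  have hc : 0 < (γ : ℝ) := by positivity
  rw [integral_of_hasDerivAt_of_tendsto (hasDerivAt_cauchyProductPrimitive hab hγ)
    (integrable_cauchyPDFReal_mul_cauchyPDFReal a b γ)
    (tendsto_cauchyProductPrimitive_atBot a b hc) (tendsto_cauchyProductPrimitive_atTop a b hc),
    cauchyPDFReal_def]
  push_cast
  rw [← neg_sub a b, neg_sq]
  field_simp
  ring

lemma integrable_inv_sq_add_sq {d : ℝ} (hd : d ≠ 0) :
    Integrable fun x : ℝ => (d ^ 2 + x ^ 2)⁻¹ := by
  refine ((integrable_cauchyPDFReal 0 (γ := |d|.toNNReal)).const_mul (π / |d|)).congr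
    (ae_of_all _ fun x => ?_)
  have : 0 < |d| := abs_pos.mpr hd
  dsimp only
  rw [cauchyPDFReal_toNNReal 0 this.le, sq_abs, sub_zero]
  field_simp
  ring

lemma integral_Ioi_inv_sq_add_sq {d : ℝ} (hd : d ≠ 0) :
    ∫ x in Ioi 0, (d ^ 2 + x ^ 2)⁻¹ = π / (2 * |d|) := by
  have hd' : 0 < |d| := abs_pos.mpr hd
  have h := integral_comp_mul_left_Ioi (fun x : ℝ => (1 + x ^ 2)⁻¹) 0 (inv_pos.mpr hd')
  rw [mul_zero, integral_Ioi_inv_one_add_sq, arctan_zero, sub_zero, smul_eq_mul, inv_inv] at h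
  calc ∫ x in Ioi 0, (d ^ 2 + x ^ 2)⁻¹ = ∫ x in Ioi 0, (d ^ 2)⁻¹ * (1 + (|d|⁻¹ * x) ^ 2)⁻¹ := by
        refine setIntegral_congr_fun measurableSet_Ioi fun x _ => ?_
        rw [← mul_inv, mul_add, mul_pow, ← sq_abs d, inv_pow, mul_inv_cancel_left₀ (by positivity)]
        ring
    _ = π / (2 * |d|) := by
        rw [integral_const_mul, h, ← sq_abs d]
        field_simp

lemma lintegral_ofReal_prod_cauchy_pair_mul_rpow_neg_one {a b : ℝ} (hab : a ≠ b) {c : ℝ}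
    (hc : 0 < c) :
    ∫⁻ t, ENNReal.ofReal ((∏ i, c / (π * ((![a, b] i - t) ^ 2 + c ^ 2))) * c ^ (-1 : ℝ)) =
      ENNReal.ofReal (2 / π * ((a - b) ^ 2 + (2 * c) ^ 2)⁻¹) := by
  have hγ : c.toNNReal ≠ 0 := by simpa using hc
  have hpt : ∀ t, (∏ i, c / (π * ((![a, b] i - t) ^ 2 + c ^ 2))) * c ^ (-1 : ℝ) =
      cauchyPDFReal a c.toNNReal t * cauchyPDFReal b c.toNNReal t * c⁻¹ := fun t => by
    simp only [Fin.prod_univ_two, Matrix.cons_val_zero, Matrix.cons_val_one,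
      cauchyPDFReal_comm _ _ t, cauchyPDFReal_toNNReal t hc.le, rpow_neg_one]
  simp_rw [hpt]
  rw [← ofReal_integral_eq_lintegral_ofReal
      ((integrable_cauchyPDFReal_mul_cauchyPDFReal a b _).mul_const _)
      (ae_of_all _ fun t => mul_nonneg (mul_nonneg (cauchyPDFReal_nonneg _ _ t)
        (cauchyPDFReal_nonneg _ _ t)) (inv_nonneg.mpr hc.le)),
    integral_mul_const, integral_cauchyPDFReal_mul_cauchyPDFReal hab hγ, cauchyPDFReal_def]
  push_cast
  rw [Real.coe_toNNReal _ hc.le, ← neg_sub a b, neg_sq]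
  field_simp

/-- For `y₁ ≠ y₂`, the Cauchy improper-mixture intensity with `p = 1` is
`λ_{2,1}(y₁,y₂) = 1/(2|y₁ - y₂|)`. -/
theorem cauchyIntensity_two_one (y₁ y₂ : ℝ) (h : y₁ ≠ y₂) :
    cauchyIntensity 2 1 ![y₁, y₂] = ENNReal.ofReal (1 / (2 * |y₁ - y₂|)) := by
  have hd : y₁ - y₂ ≠ 0 := sub_ne_zero.mpr h
  set g : ℝ → ℝ := fun c => 2 / π * ((y₁ - y₂) ^ 2 + (2 * c) ^ 2)⁻¹
  have hg : Integrable g :=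
    ((integrable_inv_sq_add_sq hd).comp_mul_left' two_ne_zero).const_mul _
  calc cauchyIntensity 2 1 ![y₁, y₂] = ∫⁻ c in Ioi 0, ENNReal.ofReal (g c) :=
        setLIntegral_congr_fun measurableSet_Ioi fun c hc =>
          lintegral_ofReal_prod_cauchy_pair_mul_rpow_neg_one h hc
    _ = ENNReal.ofReal (∫ c in Ioi 0, g c) :=
        (ofReal_integral_eq_lintegral_ofReal hg.integrableOn
          (ae_of_all _ fun c => by positivity)).symm
    _ = ENNReal.ofReal (1 / (2 * |y₁ - y₂|)) := by
        rw [integral_const_mul, integral_comp_mul_left_Ioi (fun x => ((y₁ - y₂) ^ 2 + x ^ 2)⁻¹)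
          0 two_pos, mul_zero, integral_Ioi_inv_sq_add_sq hd, smul_eq_mul]
        field_simp
end

section
/- Non-observability of the ratio process under the improper prior π(θ) dθ dφ: let π : (0, ∞) → [0, ∞] be measurable and not Lebesgue-almost-everywhere zero, and let 0 < a < b. Then ∫_{{(x, y) ∈ (0,∞)² : a < y/x < b}} λ(x, y) dx dy = ∞, where λ(x, y) = 2 ∫_0^∞ θ π(θ)/(θx + y)³ dθ is the marginal intensity on the observation space obtained by integrating the joint density θφ² e^{−φ(θx + y)} π(θ) over φ ∈ (0, ∞) and θ ∈ (0, ∞). -/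
open MeasureTheory
open scoped ENNReal

private lemma aux_inv_lintegral_top :
    ∫⁻ x in Set.Ioo (0 : ℝ) 1, ENNReal.ofReal x⁻¹ = ⊤ := by
  by_contra h
  have hmeas : AEStronglyMeasurable (fun x : ℝ => x⁻¹)
      (volume.restrict (Set.Ioo (0 : ℝ) 1)) := measurable_inv.aestronglyMeasurable
  have hpos : 0 ≤ᵐ[volume.restrict (Set.Ioo (0 : ℝ) 1)] fun x : ℝ => x⁻¹ := by
    filter_upwards [ae_restrict_mem measurableSet_Ioo] with x hx
    exact inv_nonneg.2 hx.1.le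
  have hint : IntegrableOn (fun x : ℝ => x⁻¹) (Set.Ioo (0 : ℝ) 1) :=
    (lintegral_ofReal_ne_top_iff_integrable hmeas hpos).1 h
  have hII : IntervalIntegrable (fun x : ℝ => x⁻¹) volume 0 1 := by
    rw [intervalIntegrable_iff_integrableOn_Ioo_of_le zero_le_one]
    exact hint
  rw [intervalIntegrable_inv_iff] at hII
  rcases hII with h1 | h1
  · norm_num at h1
  · exact h1 (by simp)

/-- Non-observability of the ratio process under the improper prior
`π(θ) dθ dφ`: for any measurable `π : (0,∞) → [0,∞]` that is not Lebesgue-a.e.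
zero, the marginal intensity `λ(x,y) = 2∫₀^∞ θπ(θ)/(θx+y)³ dθ` has infinite
integral over every cone `{(x,y) : 0 < x, 0 < y, a < y/x < b}`. -/
theorem ratio_process_not_observable (prior : ℝ → ℝ≥0∞) (hmeas : Measurable prior)
    (hne : ¬ ∀ᵐ θ ∂(volume.restrict (Set.Ioi (0 : ℝ))), prior θ = 0)
    (a b : ℝ) (ha : 0 < a) (hab : a < b) :
    (∫⁻ q in {q : ℝ × ℝ | 0 < q.1 ∧ 0 < q.2 ∧ a < q.2 / q.1 ∧ q.2 / q.1 < b},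
        (2 * ∫⁻ θ in Set.Ioi (0 : ℝ),
          ENNReal.ofReal θ * prior θ / ENNReal.ofReal ((θ * q.1 + q.2) ^ 3)) ∂volume) = ⊤ := by
  set S : Set (ℝ × ℝ) :=
    {q : ℝ × ℝ | 0 < q.1 ∧ 0 < q.2 ∧ a < q.2 / q.1 ∧ q.2 / q.1 < b} with hS_def
  have hb : (0 : ℝ) < b := ha.trans hab
  have hS : MeasurableSet S := by
    apply MeasurableSet.inter (measurableSet_lt measurable_const measurable_fst)
    apply MeasurableSet.inter (measurableSet_lt measurable_const measurable_snd)
    exact MeasurableSet.inter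
      (measurableSet_lt measurable_const (measurable_snd.div measurable_fst))
      (measurableSet_lt (measurable_snd.div measurable_fst) measurable_const)
  -- the constant C
  set f : ℝ → ℝ≥0∞ := fun θ =>
    ENNReal.ofReal θ * prior θ / ENNReal.ofReal ((θ + b) ^ 3) with hf_def
  have hf_meas : Measurable f := by
    apply Measurable.div
    · exact (ENNReal.measurable_ofReal.comp measurable_id).mul hmeas
    · exact ENNReal.measurable_ofReal.comp ((measurable_id.add_const b).pow_const 3)
  set C : ℝ≥0∞ := ∫⁻ θ in Set.Ioi (0 : ℝ), f θ with hC_def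
  have hC_pos : 0 < C := by
    rw [hC_def, lintegral_pos_iff_support hf_meas]
    have hsub : {θ : ℝ | prior θ ≠ 0} ∩ Set.Ioi 0 ⊆ Function.support f := by
      rintro θ ⟨hθ1, hθ2⟩
      have h1 : ENNReal.ofReal θ * prior θ ≠ 0 :=
        mul_ne_zero (by simpa [ENNReal.ofReal_eq_zero, not_le] using (hθ2 : (0:ℝ) < θ)) hθ1
      have h2 : ENNReal.ofReal ((θ + b) ^ 3) ≠ ⊤ := ENNReal.ofReal_ne_top
      exact (ENNReal.div_pos h1 h2).ne'
    have hAne : (volume.restrict (Set.Ioi (0:ℝ))) {θ | prior θ ≠ 0} ≠ 0 := by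
      intro h0
      exact hne (ae_iff.mpr h0)
    have hAmeas : MeasurableSet {θ : ℝ | prior θ ≠ 0} :=
      (hmeas (measurableSet_singleton 0)).compl
    have := measure_mono (μ := volume.restrict (Set.Ioi (0:ℝ))) hsub
    have heq : (volume.restrict (Set.Ioi (0:ℝ))) ({θ : ℝ | prior θ ≠ 0} ∩ Set.Ioi 0)
        = (volume.restrict (Set.Ioi (0:ℝ))) {θ : ℝ | prior θ ≠ 0} := by
      rw [Measure.restrict_apply hAmeas, Measure.restrict_apply (hAmeas.inter measurableSet_Ioi),
        Set.inter_assoc, Set.inter_self]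
    calc (0 : ℝ≥0∞) < (volume.restrict (Set.Ioi (0:ℝ))) {θ | prior θ ≠ 0} :=
          pos_iff_ne_zero.2 hAne
      _ = (volume.restrict (Set.Ioi (0:ℝ))) ({θ : ℝ | prior θ ≠ 0} ∩ Set.Ioi 0) := heq.symm
      _ ≤ _ := this
  -- pointwise lower bound on the cone
  have key : ∀ q ∈ S,
      2 * C * (ENNReal.ofReal (q.1 ^ 3))⁻¹ ≤
      2 * ∫⁻ θ in Set.Ioi (0 : ℝ),
          ENNReal.ofReal θ * prior θ / ENNReal.ofReal ((θ * q.1 + q.2) ^ 3) := by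
    rintro ⟨x, y⟩ ⟨hx, hy, hay, hyb⟩
    simp only at hx hy hay hyb ⊢
    have hybx : y ≤ b * x := le_of_lt ((div_lt_iff₀ hx).1 hyb)
    have hinner : C * (ENNReal.ofReal (x ^ 3))⁻¹ ≤
        ∫⁻ θ in Set.Ioi (0 : ℝ),
          ENNReal.ofReal θ * prior θ / ENNReal.ofReal ((θ * x + y) ^ 3) := by
      have hpt : ∀ θ ∈ Set.Ioi (0:ℝ),
          f θ * (ENNReal.ofReal (x ^ 3))⁻¹ ≤
          ENNReal.ofReal θ * prior θ / ENNReal.ofReal ((θ * x + y) ^ 3) := by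
        intro θ hθ
        have hθ0 : (0:ℝ) < θ := hθ
        have hreal : (θ * x + y) ^ 3 ≤ (θ + b) ^ 3 * x ^ 3 := by
          rw [← mul_pow]
          apply pow_le_pow_left₀ (by positivity)
          nlinarith
        have hstep1 : ENNReal.ofReal θ * prior θ / ENNReal.ofReal ((θ + b) ^ 3 * x ^ 3)
            ≤ ENNReal.ofReal θ * prior θ / ENNReal.ofReal ((θ * x + y) ^ 3) :=
          ENNReal.div_le_div_left (ENNReal.ofReal_le_ofReal hreal) _
        refine le_trans (le_of_eq ?_) hstep1
        simp only [hf_def]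
        have hc1 : ENNReal.ofReal ((θ + b) ^ 3) ≠ 0 := by
          simp only [ne_eq, ENNReal.ofReal_eq_zero, not_le]; positivity
        have hc2 : ENNReal.ofReal (x ^ 3) ≠ 0 := by
          simp only [ne_eq, ENNReal.ofReal_eq_zero, not_le]; positivity
        rw [ENNReal.ofReal_mul (by positivity), div_eq_mul_inv, div_eq_mul_inv,
          ENNReal.mul_inv (Or.inl hc1) (Or.inr hc2), mul_assoc]
      calc C * (ENNReal.ofReal (x ^ 3))⁻¹
          = ∫⁻ θ in Set.Ioi (0:ℝ), f θ * (ENNReal.ofReal (x ^ 3))⁻¹ :=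
            (lintegral_mul_const _ hf_meas).symm
        _ ≤ _ := setLIntegral_mono' measurableSet_Ioi hpt
    calc 2 * C * (ENNReal.ofReal (x ^ 3))⁻¹ = 2 * (C * (ENNReal.ofReal (x ^ 3))⁻¹) := by ring
      _ ≤ _ := mul_le_mul_right hinner 2
  -- reduce to a one-dimensional integral
  have hmono : ∫⁻ q in S, 2 * C * (ENNReal.ofReal (q.1 ^ 3))⁻¹ ∂volume ≤
      ∫⁻ q in S, (2 * ∫⁻ θ in Set.Ioi (0 : ℝ),
          ENNReal.ofReal θ * prior θ / ENNReal.ofReal ((θ * q.1 + q.2) ^ 3)) ∂volume :=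
    setLIntegral_mono' hS key
  rw [eq_top_iff]
  refine le_trans (le_of_eq ?_) hmono
  -- compute the left integral via Tonelli
  have hg_meas : Measurable fun q : ℝ × ℝ => 2 * C * (ENNReal.ofReal (q.1 ^ 3))⁻¹ := by
    apply Measurable.const_mul
    exact (ENNReal.measurable_ofReal.comp (measurable_fst.pow_const 3)).inv
  have hTonelli : ∫⁻ q in S, 2 * C * (ENNReal.ofReal (q.1 ^ 3))⁻¹ ∂volume
      = ∫⁻ x : ℝ, ∫⁻ y : ℝ,
          S.indicator (fun q : ℝ × ℝ => 2 * C * (ENNReal.ofReal (q.1 ^ 3))⁻¹) (x, y) := by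
    rw [← lintegral_indicator hS, MeasureTheory.Measure.volume_eq_prod,
      lintegral_prod _ ((hg_meas.indicator hS).aemeasurable)]
  have hsection : ∀ x : ℝ, (∫⁻ y : ℝ,
      S.indicator (fun q : ℝ × ℝ => 2 * C * (ENNReal.ofReal (q.1 ^ 3))⁻¹) (x, y))
      = (Set.Ioi (0:ℝ)).indicator
          (fun x => 2 * C * (ENNReal.ofReal (x ^ 3))⁻¹ * ENNReal.ofReal ((b - a) * x)) x := by
    intro x
    by_cases hx : 0 < x
    · have hsec : ∀ y : ℝ,
          S.indicator (fun q : ℝ × ℝ => 2 * C * (ENNReal.ofReal (q.1 ^ 3))⁻¹) (x, y)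
          = (Set.Ioo (a * x) (b * x)).indicator
              (fun _ => 2 * C * (ENNReal.ofReal (x ^ 3))⁻¹) y := by
        intro y
        have hmem : (x, y) ∈ S ↔ y ∈ Set.Ioo (a * x) (b * x) := by
          simp only [hS_def, Set.mem_setOf_eq, Set.mem_Ioo]
          constructor
          · rintro ⟨-, -, h1, h2⟩
            exact ⟨(lt_div_iff₀ hx).1 h1, (div_lt_iff₀ hx).1 h2⟩
          · rintro ⟨h1, h2⟩
            exact ⟨hx, lt_trans (by positivity) h1, (lt_div_iff₀ hx).2 h1, (div_lt_iff₀ hx).2 h2⟩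
        by_cases hmem' : (x, y) ∈ S
        · rw [Set.indicator_of_mem hmem', Set.indicator_of_mem (hmem.1 hmem')]
        · rw [Set.indicator_of_notMem hmem', Set.indicator_of_notMem (fun h => hmem' (hmem.2 h))]
      simp only [hsec]
      rw [lintegral_indicator measurableSet_Ioo, setLIntegral_const,
        Set.indicator_of_mem (Set.mem_Ioi.2 hx), Real.volume_Ioo]
      congr 1
      ring_nf
    · have hsec : ∀ y : ℝ,
          S.indicator (fun q : ℝ × ℝ => 2 * C * (ENNReal.ofReal (q.1 ^ 3))⁻¹) (x, y) = 0 := by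
        intro y
        apply Set.indicator_of_notMem
        rintro ⟨h1, -⟩
        exact hx h1
      simp only [hsec, lintegral_zero, Set.indicator_of_notMem (fun h => hx (Set.mem_Ioi.1 h))]
  rw [hTonelli]
  simp only [hsection]
  rw [lintegral_indicator measurableSet_Ioi]
  -- now show ∫⁻ x in Ioi 0, 2C(x³)⁻¹ * ((b-a)x) = ⊤
  rw [eq_comm, eq_top_iff]
  have hrestrict : ∫⁻ x in Set.Ioo (0:ℝ) 1,
      2 * C * (ENNReal.ofReal (x ^ 3))⁻¹ * ENNReal.ofReal ((b - a) * x) ≤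
      ∫⁻ x in Set.Ioi (0:ℝ),
      2 * C * (ENNReal.ofReal (x ^ 3))⁻¹ * ENNReal.ofReal ((b - a) * x) :=
    lintegral_mono_set (fun x hx => hx.1)
  refine le_trans ?_ hrestrict
  have hbd : ∀ x ∈ Set.Ioo (0:ℝ) 1,
      2 * C * ENNReal.ofReal (b - a) * ENNReal.ofReal x⁻¹ ≤
      2 * C * (ENNReal.ofReal (x ^ 3))⁻¹ * ENNReal.ofReal ((b - a) * x) := by
    rintro x ⟨hx0, hx1⟩
    have h3 : (0:ℝ) < x ^ 3 := by positivity
    have hinv : x⁻¹ ≤ (x ^ 3)⁻¹ * x := by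
      rw [← mul_comm x, ← div_eq_mul_inv, le_div_iff₀ h3]
      calc x⁻¹ * x ^ 3 = x ^ 2 * (x⁻¹ * x) := by ring
        _ = x ^ 2 := by rw [inv_mul_cancel₀ hx0.ne', mul_one]
        _ ≤ x := by nlinarith
    have hsub : ENNReal.ofReal (b - a) * ENNReal.ofReal x⁻¹ ≤
        (ENNReal.ofReal (x ^ 3))⁻¹ * ENNReal.ofReal ((b - a) * x) := by
      rw [← ENNReal.ofReal_inv_of_pos h3, ← ENNReal.ofReal_mul (by linarith),
        ← ENNReal.ofReal_mul (by positivity)]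
      apply ENNReal.ofReal_le_ofReal
      calc (b - a) * x⁻¹ ≤ (b - a) * ((x ^ 3)⁻¹ * x) :=
            mul_le_mul_of_nonneg_left hinv (by linarith)
        _ = (x ^ 3)⁻¹ * ((b - a) * x) := by ring
    calc 2 * C * ENNReal.ofReal (b - a) * ENNReal.ofReal x⁻¹
        = 2 * C * (ENNReal.ofReal (b - a) * ENNReal.ofReal x⁻¹) := by ring
      _ ≤ 2 * C * ((ENNReal.ofReal (x ^ 3))⁻¹ * ENNReal.ofReal ((b - a) * x)) :=
          mul_le_mul_right hsub _
      _ = 2 * C * (ENNReal.ofReal (x ^ 3))⁻¹ * ENNReal.ofReal ((b - a) * x) := by ring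
  refine le_trans ?_ (setLIntegral_mono' measurableSet_Ioo hbd)
  rw [lintegral_const_mul _ measurable_inv.ennreal_ofReal,
    aux_inv_lintegral_top, ENNReal.mul_top]
  · exact mul_ne_zero (mul_ne_zero (by norm_num) hC_pos.ne')
      (by simp only [ne_eq, ENNReal.ofReal_eq_zero, not_le]; linarith)
end

section
/- The two posterior computations in the Stone–Dawid marginalization paradox can never agree: there do not exist a measurable function π : (0, ∞) → [0, ∞) that is not Lebesgue-almost-everywhere zero and a function c : (0, ∞) → (0, ∞) such that for every z > 0, θ π(θ)/(θ + z)³ = c(z) · θ π(θ)/(θ + z)² holds for Lebesgue-almost-every θ ∈ (0, ∞). -/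
open MeasureTheory

/-! Take `z = 1`. Wherever `θ * π θ ≠ 0`, cancelling `θ * π θ / (θ + 1) ^ 2` from the agreement
equation leaves `c 1 * (θ + 1) = 1`, so `π` can be nonzero only at the single point
`θ = (c 1)⁻¹ - 1`, a Lebesgue-null set. -/

lemma mul_eq_one_of_div_pow_three_eq_mul_div_sq {K : Type*} [Field K] {a t c : K}
    (ha : a ≠ 0) (ht : t ≠ 0) (h : a / t ^ 3 = c * (a / t ^ 2)) : c * t = 1 := by
  field_simp at h
  linear_combination -h

/-- The two posterior computations in the Stone–Dawid marginalization paradox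
can never agree: there is no measurable `π : (0,∞) → [0,∞)`, not Lebesgue-a.e.
zero, and no `c : (0,∞) → (0,∞)` such that for every `z > 0`,
`θπ(θ)/(θ+z)³ = c(z) θπ(θ)/(θ+z)²` for Lebesgue-a.e. `θ > 0`. -/
theorem stone_dawid_no_agreement :
    ¬ ∃ (prior : ℝ → ℝ) (c : ℝ → ℝ),
        Measurable prior ∧
        (∀ θ ∈ Set.Ioi (0 : ℝ), 0 ≤ prior θ) ∧
        ¬ (∀ᵐ θ ∂(volume.restrict (Set.Ioi (0 : ℝ))), prior θ = 0) ∧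
        (∀ z ∈ Set.Ioi (0 : ℝ), 0 < c z) ∧
        (∀ z ∈ Set.Ioi (0 : ℝ),
          ∀ᵐ θ ∂(volume.restrict (Set.Ioi (0 : ℝ))),
            θ * prior θ / (θ + z) ^ 3 = c z * (θ * prior θ / (θ + z) ^ 2)) := by
  rintro ⟨prior, c, -, -, hprior, -, hagree⟩
  refine hprior ?_
  filter_upwards [hagree 1 (Set.mem_Ioi.mpr one_pos), ae_restrict_mem measurableSet_Ioi,
    Measure.ae_ne _ ((c 1)⁻¹ - 1)] with θ hθ (hθpos : 0 < θ) hθne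
  by_contra hθprior
  have hc : c 1 * (θ + 1) = 1 :=
    mul_eq_one_of_div_pow_three_eq_mul_div_sq (mul_ne_zero hθpos.ne' hθprior) (by positivity) hθ
  exact hθne (eq_sub_of_add_eq (eq_inv_of_mul_eq_one_right hc))
end

section
/- σ-finiteness of the Gaussian improper mixture marginal: for every integer n ≥ 2 and every real p with n + p > 2, the measure on ℝⁿ given by Lebesgue measure with density y ↦ Λ_{n,p}(y) is σ-finite, where Λ_{n,p}(y) = ∫_0^∞ ∫_{−∞}^∞ (2πσ²)^{−n/2} exp(−∑_{i=1}^n (y_i − θ)²/(2σ²)) σ^{−p} dθ dσ (with values in [0, ∞]). -/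
open MeasureTheory
open scoped ENNReal

/-!
Two distinct coordinates `y i ≠ y j` give `∑ₖ (yₖ - θ)² ≥ (yᵢ - yⱼ)²/2 + 2(θ - m)²` with `m` their
midpoint, so the `θ`-integral is at most a constant times `σ^(1-n-p) exp(-(yᵢ - yⱼ)²/(4σ²))`.
This is integrable on `(0, ∞)`: at `∞` because `n + p > 2`, at `0` thanks to the exponential.
Hence `Λ` is finite off the hyperplane `{y₀ = y₁}`, which is Lebesgue-null.
-/

open Real Set

lemma lintegral_ofReal_exp_neg_mul_sq_sub {b : ℝ} (hb : 0 < b) (a : ℝ) :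
    ∫⁻ θ : ℝ, ENNReal.ofReal (exp (-b * (θ - a) ^ 2)) = ENNReal.ofReal √(π / b) := by
  rw [lintegral_sub_right_eq_self (fun x => ENNReal.ofReal (exp (-b * x ^ 2))) a,
    ← ofReal_integral_eq_lintegral_ofReal (integrable_exp_neg_mul_sq hb)
      (ae_of_all _ fun _ => (exp_pos _).le), integral_gaussian]

/-- Substituting `x ↦ x⁻¹` gives the Gaussian moment `∫₀^∞ t^(-q-2) exp(-b t²) dt`. -/
lemma integrableOn_rpow_mul_exp_neg_div_sq {q b : ℝ} (hq : q < -1) (hb : 0 < b) :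
    IntegrableOn (fun x : ℝ => x ^ q * exp (-b / x ^ 2)) (Ioi 0) := by
  refine ((integrableOn_Ioi_comp_rpow_iff' _ (neg_ne_zero.mpr one_ne_zero)).mpr
    (integrableOn_rpow_mul_exp_neg_mul_sq hb (by linarith : -1 < -q - 2))).congr_fun
    (fun x (hx : 0 < x) => ?_) measurableSet_Ioi
  dsimp only
  rw [smul_eq_mul, ← mul_assoc, ← rpow_mul hx.le, ← rpow_add hx, rpow_neg_one, inv_pow,
    ← div_eq_mul_inv]
  norm_num

lemma sq_sub_add_sq_sub_le_sum {ι : Type*} [Fintype ι] {i j : ι} (hij : i ≠ j) (y : ι → ℝ)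
    (θ : ℝ) : (y i - y j) ^ 2 / 2 + 2 * (θ - (y i + y j) / 2) ^ 2 ≤ ∑ k, (y k - θ) ^ 2 := by
  classical
  calc (y i - y j) ^ 2 / 2 + 2 * (θ - (y i + y j) / 2) ^ 2
      = ∑ k ∈ {i, j}, (y k - θ) ^ 2 := by rw [Finset.sum_pair hij]; ring
    _ ≤ ∑ k, (y k - θ) ^ 2 :=
      Finset.sum_le_sum_of_subset_of_nonneg (Finset.subset_univ _) fun k _ _ => sq_nonneg _

lemma volume_setOf_apply_eq_apply {ι : Type*} [Fintype ι] {i j : ι} (hij : i ≠ j) :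
    volume {y : ι → ℝ | y i = y j} = 0 := by
  classical
  let L : (ι → ℝ) →ₗ[ℝ] ℝ := LinearMap.proj (R := ℝ) (φ := fun _ : ι => ℝ) i - LinearMap.proj j
  have hL : {y : ι → ℝ | y i = y j} = LinearMap.ker L := by
    ext y
    simp [L, sub_eq_zero]
  refine hL ▸ Measure.addHaar_submodule _ _ fun htop => ?_
  have : Pi.single i 1 ∈ LinearMap.ker L := htop ▸ Submodule.mem_top
  simp [L, Pi.single_eq_of_ne' hij] at this

lemma lintegral_gaussIntensity_inner_le {n : ℕ} (p : ℝ) {σ : ℝ} (hσ : 0 < σ) (y : Fin n → ℝ) {i j : Fin n}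
    (hij : i ≠ j) :
    ∫⁻ θ : ℝ, ENNReal.ofReal ((2 * π * σ ^ 2) ^ (-(n : ℝ) / 2) *
        exp (-(∑ k, (y k - θ) ^ 2) / (2 * σ ^ 2)) * σ ^ (-p)) ≤
      ENNReal.ofReal ((2 * π) ^ (-(n : ℝ) / 2) * √π *
        (σ ^ (1 - n - p) * exp (-((y i - y j) ^ 2 / 4) / σ ^ 2))) := by
  set m := (y i + y j) / 2
  set A := (2 * π * σ ^ 2) ^ (-(n : ℝ) / 2) * σ ^ (-p) * exp (-((y i - y j) ^ 2 / 4) / σ ^ 2)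
  have hA : 0 ≤ A := by positivity
  have hb : 0 < (σ ^ 2)⁻¹ := by positivity
  have density_le (θ : ℝ) : (2 * π * σ ^ 2) ^ (-(n : ℝ) / 2) *
      exp (-(∑ k, (y k - θ) ^ 2) / (2 * σ ^ 2)) * σ ^ (-p) ≤
        A * exp (-(σ ^ 2)⁻¹ * (θ - m) ^ 2) := by
    have hexp : -(∑ k, (y k - θ) ^ 2) / (2 * σ ^ 2) ≤
        -((y i - y j) ^ 2 / 4) / σ ^ 2 + -(σ ^ 2)⁻¹ * (θ - m) ^ 2 :=
      calc -(∑ k, (y k - θ) ^ 2) / (2 * σ ^ 2)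
          ≤ -((y i - y j) ^ 2 / 2 + 2 * (θ - m) ^ 2) / (2 * σ ^ 2) :=
            div_le_div_of_nonneg_right (neg_le_neg (sq_sub_add_sq_sub_le_sum hij y θ))
              (by positivity)
        _ = _ := by field_simp; ring
    calc _ ≤ (2 * π * σ ^ 2) ^ (-(n : ℝ) / 2) *
          exp (-((y i - y j) ^ 2 / 4) / σ ^ 2 + -(σ ^ 2)⁻¹ * (θ - m) ^ 2) * σ ^ (-p) := by
          gcongr
      _ = A * exp (-(σ ^ 2)⁻¹ * (θ - m) ^ 2) := by rw [exp_add]; ring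
  have hσn : (2 * π * σ ^ 2) ^ (-(n : ℝ) / 2) = (2 * π) ^ (-(n : ℝ) / 2) * σ ^ (-(n : ℝ)) := by
    rw [mul_rpow (by positivity) (by positivity), ← rpow_natCast, ← rpow_mul hσ.le]
    congr 2
    push_cast
    ring
  have hsqrt : √(π / (σ ^ 2)⁻¹) = √π * σ := by
    rw [div_inv_eq_mul, sqrt_mul pi_pos.le, sqrt_sq hσ.le]
  calc _ ≤ ∫⁻ θ : ℝ, ENNReal.ofReal A * ENNReal.ofReal (exp (-(σ ^ 2)⁻¹ * (θ - m) ^ 2)) :=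
        lintegral_mono fun θ => (ENNReal.ofReal_le_ofReal (density_le θ)).trans_eq
          (ENNReal.ofReal_mul hA)
    _ = ENNReal.ofReal (A * √(π / (σ ^ 2)⁻¹)) := by
        rw [lintegral_const_mul' _ _ ENNReal.ofReal_ne_top,
          lintegral_ofReal_exp_neg_mul_sq_sub hb, ENNReal.ofReal_mul hA]
    _ = _ := by
        simp only [hsqrt, A, hσn]
        rw [show (1 : ℝ) - n - p = -n + -p + 1 by ring, rpow_add hσ, rpow_add hσ,
          rpow_one]
        ring_nf

lemma gaussIntensity_ne_top {n : ℕ} {p : ℝ} (hp : 2 < (n : ℝ) + p) {y : Fin n → ℝ}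
    {i j : Fin n} (hij : i ≠ j) (hy : y i ≠ y j) : gaussIntensity n p y ≠ ∞ := by
  have hc : 0 < (y i - y j) ^ 2 / 4 := by
    have := sub_ne_zero.mpr hy
    positivity
  have hint := (integrableOn_rpow_mul_exp_neg_div_sq (by linarith : 1 - n - p < -1) hc).const_mul
    ((2 * π) ^ (-(n : ℝ) / 2) * √π)
  refine ne_top_of_le_ne_top hint.lintegral_lt_top.ne (setLIntegral_mono ?_ ?_)
  · exact (by fun_prop : Measurable _).ennreal_ofReal
  · exact fun σ hσ => lintegral_gaussIntensity_inner_le p hσ y hij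

/-- σ-finiteness of the Gaussian improper-mixture marginal: for `n ≥ 2` and
`n + p > 2`, Lebesgue measure on `ℝⁿ` with density `Λ_{n,p}` is σ-finite. -/
theorem gauss_marginal_sigmaFinite (n : ℕ) (hn : 2 ≤ n) (p : ℝ)
    (hp : 2 < (n : ℝ) + p) :
    SigmaFinite ((volume : Measure (Fin n → ℝ)).withDensity (gaussIntensity n p)) := by
  let i : Fin n := ⟨0, by omega⟩
  let j : Fin n := ⟨1, by omega⟩
  have hij : i ≠ j := by simp [i, j, Fin.ext_iff]
  apply SigmaFinite.withDensity_of_ne_top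
  filter_upwards [measure_eq_zero_iff_ae_notMem.mp (volume_setOf_apply_eq_apply hij)] with y hy
  exact gaussIntensity_ne_top hp hij hy
end
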